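/- arXiv:1508.03613 — 2 statements merged into one kernel-verified Lean document; each statement's English description precedes it below -/
import Mathlib

section
/- In a moving semigroup (M,·), the collection of DIP sets is partition regular: if A ⊆ M is DIP and A = Y ∪ Z, then Y or Z is DIP. -/
open Filter FirstOrder FirstOrder.Language

attribute [local instance] Ultrafilter.mul

/-! ## Combinatorial notions in a semigroup -/

/-- `X` is an IP set: it contains `FP u` (all finite products, in increasing order of indices,
of distinct terms) of some sequence `u`. -/
def IsIP {M : Type*} [Semigroup M] (X : Set M) : Prop :=
  ∃ u : Stream' M, Hindman.FP u ⊆ X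

/-- `X` is IIP (infinitely IP): it contains an infinite set of the form `FP u`. -/
def IsIIP {M : Type*} [Semigroup M] (X : Set M) : Prop :=
  ∃ u : Stream' M, Hindman.FP u ⊆ X ∧ (Hindman.FP u).Infinite

/-- `X` is DIP (distinctly IP): it contains `FP u` for an injective sequence `u`. -/
def IsDIP {M : Type*} [Semigroup M] (X : Set M) : Prop :=
  ∃ u : Stream' M, Function.Injective u ∧ Hindman.FP u ⊆ X

/-- An ultrafilter is nonprincipal if it is not of the form `{A | a ∈ A}` for any `a`. -/
def Ultrafilter.Nonprincipal {M : Type*} (U : Ultrafilter M) : Prop :=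
  ∀ a : M, U ≠ pure a

/-- A semigroup is moving if the product of two nonprincipal ultrafilters
(for the ultrafilter product `A ∈ U * V ↔ {m | {n | m * n ∈ A} ∈ V} ∈ U`) is nonprincipal. -/
def IsMoving (M : Type*) [Semigroup M] : Prop :=
  ∀ U V : Ultrafilter M, U.Nonprincipal → V.Nonprincipal → (U * V).Nonprincipal

/-! ## Types over a semigroup structure -/

/-- Formulas in one free variable, with parameters from `M`. -/
abbrev Form1 (L : Language) (M : Type*) := L.Formula (M ⊕ Fin 1)

/-- Formulas in two free variables (`x` and `y`), with parameters from `M`. -/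
abbrev Form2 (L : Language) (M : Type*) := L.Formula (M ⊕ Fin 2)

/-- Realization of a 1-variable formula with parameters at the point `a`. -/
def Realize1 {L : Language} {M : Type*} (S : L.Structure M) (φ : Form1 L M) (a : M) : Prop :=
  @Formula.Realize L M S _ φ (Sum.elim id fun _ => a)

/-- Realization of a 2-variable formula with parameters at the pair `(a, b)`. -/
def Realize2 {L : Language} {M : Type*} (S : L.Structure M) (φ : Form2 L M) (a b : M) : Prop :=
  @Formula.Realize L M S _ φ (Sum.elim id ![a, b])

/-- A complete 1-type over the structure `S` (with parameters for all elements of `M`):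
a complete, finitely satisfiable (in `S`) set of formulas in one free variable. -/
def IsCompleteType1 {L : Language} {M : Type*} (S : L.Structure M)
    (p : Set (Form1 L M)) : Prop :=
  (∀ φ : Form1 L M, φ ∈ p ↔ φ.not ∉ p) ∧
    ∀ s : Finset (Form1 L M), ↑s ⊆ p → ∃ a : M, ∀ φ ∈ s, Realize1 S φ a

/-- A complete 2-type over the structure `S` (with parameters for all elements of `M`). -/
def IsCompleteType2 {L : Language} {M : Type*} (S : L.Structure M)
    (q : Set (Form2 L M)) : Prop :=
  (∀ φ : Form2 L M, φ ∈ q ↔ φ.not ∉ q) ∧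
    ∀ s : Finset (Form2 L M), ↑s ⊆ q → ∃ a b : M, ∀ φ ∈ s, Realize2 S φ a b

/-- `substX u φ` is `φ(u, y)`: the element `u` is substituted for the variable `x`. -/
def substX {L : Language} {M : Type*} (u : M) (φ : Form2 L M) : Form2 L M :=
  φ.subst (Sum.elim (fun m => Term.var (Sum.inl m))
    ![Term.var (Sum.inl u), Term.var (Sum.inr 1)])

/-- A 2-type `q(x, y)` is independent if for every `φ(x, y) ∈ q` there is `u ∈ M` with
`φ(u, y) ∈ q`. -/
def IsIndependent {L : Language} {M : Type*} (q : Set (Form2 L M)) : Prop :=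
  ∀ φ ∈ q, ∃ u : M, substX u φ ∈ q

/-- `toX φ` views the 1-variable formula `φ` as a 2-variable formula `φ(x)`. -/
def toX {L : Language} {M : Type*} (φ : Form1 L M) : Form2 L M :=
  φ.subst (Sum.elim (fun m => Term.var (Sum.inl m)) fun _ => Term.var (Sum.inr 0))

/-- `toY φ` views the 1-variable formula `φ` as a 2-variable formula `φ(y)`. -/
def toY {L : Language} {M : Type*} (φ : Form1 L M) : Form2 L M :=
  φ.subst (Sum.elim (fun m => Term.var (Sum.inl m)) fun _ => Term.var (Sum.inr 1))

/-- `toXY f φ` is `φ(x · y)`, where `f` is the distinguished binary function symbol. -/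
def toXY {L : Language} {M : Type*} (f : L.Functions 2) (φ : Form1 L M) : Form2 L M :=
  φ.subst (Sum.elim (fun m => Term.var (Sum.inl m))
    fun _ => Term.func f ![Term.var (Sum.inr 0), Term.var (Sum.inr 1)])

/-- A complete 1-type `p` over `S` is idempotent (with respect to the binary function symbol `f`
interpreted as the semigroup operation) if there is an independent complete 2-type `q(x, y)` with
`p(x) ⊆ q`, `p(y) ⊆ q` and `p(x · y) ⊆ q`. -/
def IsIdempotentType {L : Language} {M : Type*} (S : L.Structure M) (f : L.Functions 2)
    (p : Set (Form1 L M)) : Prop :=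
  IsCompleteType1 S p ∧
    ∃ q : Set (Form2 L M), IsCompleteType2 S q ∧ IsIndependent q ∧
      (∀ φ ∈ p, toX φ ∈ q) ∧ (∀ φ ∈ p, toY φ ∈ q) ∧ (∀ φ ∈ p, toXY f φ ∈ q)

/-- A 1-type over `S` is principal if it is realized by an element of `M`. -/
def IsPrincipalType {L : Language} {M : Type*} (S : L.Structure M)
    (p : Set (Form1 L M)) : Prop :=
  ∃ a : M, ∀ φ ∈ p, Realize1 S φ a

/-! Let `a` be injective with `FP a ⊆ A`. The nonprincipal ultrafilters containing every tail
`FP (a.drop n)` form a closed subsemigroup of `βM` (closure under products is where `IsMoving` is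
used), nonempty because these tails are infinite; by Ellis–Numakura it contains an idempotent `U`,
and `Y ∈ U` or `Z ∈ U`. Since `U` contains every cofinite set, the Galvin–Glazer recursion inside
`U` can remove each chosen generator from the remaining large set, which makes the generated
sequence injective. -/

attribute [local instance] Ultrafilter.semigroup

open Hindman

theorem Ultrafilter.nonprincipal_iff_le_cofinite {α : Type*} (U : Ultrafilter α) :
    U.Nonprincipal ↔ (U : Filter α) ≤ cofinite := by
  rw [le_cofinite_iff_compl_singleton_mem]
  refine forall_congr' fun a => ⟨fun hne => ?_, fun hmem hpure => ?_⟩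
  · by_contra hnot
    rw [Ultrafilter.mem_coe, Ultrafilter.compl_mem_iff_notMem, not_not] at hnot
    obtain ⟨x, rfl, hx⟩ := Ultrafilter.eq_pure_of_finite_mem (Set.finite_singleton a) hnot
    exact hne hx
  · rw [hpure, Ultrafilter.mem_coe, Ultrafilter.mem_pure] at hmem
    exact hmem rfl

theorem Ultrafilter.isClosed_setOf_coe_le {α : Type*} (F : Filter α) :
    IsClosed {U : Ultrafilter α | (U : Filter α) ≤ F} := by
  simp only [Filter.le_def, Set.ofPred_forall]
  exact isClosed_biInter fun s _ => ultrafilter_isClosed_basic s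

namespace Hindman

variable {M : Type*} [Semigroup M]

theorem FP_drop_antitone (a : Stream' M) : Antitone fun n => FP (a.drop n) := by
  intro m n hmn
  obtain ⟨k, rfl⟩ := Nat.exists_eq_add_of_le hmn
  simpa only [Stream'.drop_drop, add_comm] using FP_drop_subset_FP (a.drop m) k

theorem infinite_FP_of_injective {a : Stream' M} (ha : Function.Injective a) : (FP a).Infinite :=
  Set.infinite_of_injective_forall_mem ha (FP.singleton a)

theorem mul_mem_of_forall_FP_drop_mem {a : Stream' M} {U V : Ultrafilter M}
    (hU : ∀ n, FP (a.drop n) ∈ U) (hV : ∀ n, FP (a.drop n) ∈ V) (n : ℕ) :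
    FP (a.drop n) ∈ U * V := by
  show ∀ᶠ m in U, ∀ᶠ m' in V, m * m' ∈ FP (a.drop n)
  filter_upwards [hU n] with m hm
  obtain ⟨k, hk⟩ := FP.mul hm
  filter_upwards [hV (n + k)] with m' hm'
  exact hk m' (by rwa [Stream'.drop_drop])

theorem FP_drop_subset_of_mul_mem {a : Stream' M} {S : ℕ → Set M} (hmem : ∀ n, a n ∈ S n)
    (hsub : ∀ n, S (n + 1) ⊆ S n) (hmul : ∀ n, ∀ m ∈ S (n + 1), a n * m ∈ S n) (k : ℕ) :
    FP (a.drop k) ⊆ S k := by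
  suffices h : ∀ b : Stream' M, ∀ m ∈ FP b, ∀ k, b = a.drop k → m ∈ S k from
    fun m hm => h _ m hm k rfl
  intro b m hm
  induction hm with
  | head' b =>
    rintro k rfl
    rw [Stream'.head_drop]
    exact hmem k
  | tail' b m _ ih =>
    rintro k rfl
    exact hsub k (ih (k + 1) Stream'.tail_drop')
  | cons' b m _ ih =>
    rintro k rfl
    rw [Stream'.head_drop]
    exact hmul k m (ih (k + 1) Stream'.tail_drop')

end Hindman

theorem injective_of_mem_of_notMem_succ {α : Type*} {a : ℕ → α} {S : ℕ → Set α}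
    (hS : Antitone S) (hmem : ∀ n, a n ∈ S n) (hnotmem : ∀ n, a n ∉ S (n + 1)) :
    Function.Injective a := by
  intro i j hij
  by_contra hne
  wlog hlt : i < j generalizing i j
  · exact this hij.symm (Ne.symm hne) (by omega)
  exact hnotmem i (hij ▸ hS hlt (hmem j))

section

variable {M : Type*} [Semigroup M]

theorem Ultrafilter.isDIP_of_mem {U : Ultrafilter M} (hidem : U * U = U)
    (hU : (U : Filter M) ≤ cofinite) {s : Set M} (hs : s ∈ U) : IsDIP s := by
  have : Nonempty M := ⟨(Ultrafilter.nonempty_of_mem hs).some⟩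
  have hstep : ∀ t ∈ U, ∃ x ∈ t, t ∩ (x * ·) ⁻¹' t ∩ {x}ᶜ ∈ U := by
    intro t ht
    obtain ⟨x, hxt, hx⟩ := Ultrafilter.nonempty_of_mem (inter_mem ht (hidem.symm ▸ ht :
      t ∈ U * U))
    exact ⟨x, hxt, inter_mem (inter_mem ht hx) (le_cofinite_iff_compl_singleton_mem.1 hU x)⟩
  choose! x hxmem hnext using hstep
  let next : Set M → Set M := fun t => t ∩ (x t * ·) ⁻¹' t ∩ {x t}ᶜ
  let S : ℕ → Set M := fun n => next^[n] s
  have hS_succ : ∀ n, S (n + 1) = next (S n) := fun n => Function.iterate_succ_apply' next n s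
  have hSU : ∀ n, S n ∈ U := by
    intro n
    induction n with
    | zero => exact hs
    | succ n ih => rw [hS_succ]; exact hnext _ ih
  let a : Stream' M := fun n => x (S n)
  have hmem : ∀ n, a n ∈ S n := fun n => hxmem _ (hSU n)
  have hsub : ∀ n, S (n + 1) ⊆ S n := fun n m hm => by rw [hS_succ] at hm; exact hm.1.1
  have hnotmem : ∀ n, a n ∉ S (n + 1) := fun n hm => by rw [hS_succ] at hm; exact hm.2 rfl
  have hmul : ∀ n, ∀ m ∈ S (n + 1), a n * m ∈ S n := fun n m hm => by
    rw [hS_succ] at hm; exact hm.1.2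
  refine ⟨a, injective_of_mem_of_notMem_succ (antitone_nat_of_succ_le hsub) hmem hnotmem, ?_⟩
  have hFP := FP_drop_subset_of_mul_mem hmem hsub hmul 0
  rwa [Stream'.drop_zero] at hFP

theorem IsMoving.exists_idempotent_le_cofinite_FP_mem (hM : IsMoving M) {a : Stream' M}
    (ha : Function.Injective a) :
    ∃ U : Ultrafilter M, U * U = U ∧ (U : Filter M) ≤ cofinite ∧ FP a ∈ U := by
  let F : Filter M := ⨅ n, cofinite ⊓ 𝓟 (FP (a.drop n))
  have hF : ∀ U : Ultrafilter M, (U : Filter M) ≤ F ↔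
      (U : Filter M) ≤ cofinite ∧ ∀ n, FP (a.drop n) ∈ U := by
    intro U
    simp only [F, le_iInf_iff, le_inf_iff, le_principal_iff, forall_and, forall_const,
      Ultrafilter.mem_coe]
  have hFne : F.NeBot := by
    refine iInf_neBot_of_directed' ?_ fun n => ?_
    · exact Antitone.directed_ge fun m n hmn =>
        inf_le_inf_left _ (principal_mono.2 (FP_drop_antitone a hmn))
    · exact (infinite_FP_of_injective (ha.comp (add_left_injective n))).cofinite_inf_principal_neBot
  have hFmul : ∀ U : Ultrafilter M, ↑U ≤ F → ∀ V : Ultrafilter M, ↑V ≤ F → ↑(U * V) ≤ F := by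
    intro U hU V hV
    obtain ⟨hUc, hUFP⟩ := (hF U).1 hU
    obtain ⟨hVc, hVFP⟩ := (hF V).1 hV
    have hUV :=
      hM U V (U.nonprincipal_iff_le_cofinite.2 hUc) (V.nonprincipal_iff_le_cofinite.2 hVc)
    exact (hF (U * V)).2
      ⟨(U * V).nonprincipal_iff_le_cofinite.1 hUV, mul_mem_of_forall_FP_drop_mem hUFP hVFP⟩
  obtain ⟨U, hUF, hidem⟩ := exists_idempotent_in_compact_subsemigroup
    Ultrafilter.continuous_mul_left {U : Ultrafilter M | ↑U ≤ F}
    (exists_ultrafilter_le F) (Ultrafilter.isClosed_setOf_coe_le F).isCompact hFmul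
  obtain ⟨hUc, hUFP⟩ := (hF U).1 hUF
  exact ⟨U, hidem, hUc, Stream'.drop_zero (s := a) ▸ hUFP 0⟩

end

/-- in a moving semigroup, DIP sets are partition regular. -/
theorem isDIP_partition_regular {M : Type*} [Semigroup M] (hM : IsMoving M)
    (A Y Z : Set M) (hA : IsDIP A) (hYZ : A = Y ∪ Z) : IsDIP Y ∨ IsDIP Z := by
  obtain ⟨u, hu, huA⟩ := hA
  obtain ⟨U, hidem, hU, hFP⟩ := hM.exists_idempotent_le_cofinite_FP_mem hu
  have hYZU : Y ∪ Z ∈ U := hYZ ▸ mem_of_superset hFP huA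
  exact (Ultrafilter.union_mem_iff.1 hYZU).imp (Ultrafilter.isDIP_of_mem hidem hU)
    (Ultrafilter.isDIP_of_mem hidem hU)
end

section
/- Let (M,·) be a countable Hindman semigroup (i.e., the collection of IIP subsets of M is partition regular) and let 𝓜 be a semigroup structure based on (M,·) in a countable language. Then for every 𝓜-definable set X ⊆ M that is IIP, there is a nonprincipal idempotent complete 1-type over 𝓜 containing the formula defining X. -/
open Filter FirstOrder FirstOrder.Language

attribute [local instance] Ultrafilter.mul

/-!
Enumerate the countably many formulas. Partition regularity of IIP sets yields sequences
`u₀, u₁, …` with `FP u₀ ⊆ X`, every `FP uₖ` infinite, `FP uₖ₊₁ ⊆ FP (tail uₖ)`, and `FP uₖ₊₁`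
inside the `k`-th definable set or its complement. The sets `FP uₖ` generate a filter `F` whose
formulas form a complete type `p`, nonprincipal since `F` contains no finite set. With `aᵢ` the
head of `uᵢ` we have `aᵢ · FP uᵢ₊₁ ⊆ FP uᵢ`, so along a nonprincipal ultrafilter `𝒰` on `ℕ` the
2-type `{ψ | ψ(aᵢ, y) ∈ p for 𝒰-almost all i}` is independent and contains `p(x)`, `p(y)` and
`p(x · y)`.
-/

theorem countable_formula {L : Language} [Countable L.Symbols] (α : Type*) [Countable α] :
    Countable (L.Formula α) :=
  have : Countable (Σ l, L.Relations l) :=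
    (Sum.inr_injective (α := Σ l, L.Functions l)).countable
  have : Countable (Σ n, L.BoundedFormula α n) :=
    BoundedFormula.listEncode_sigma_injective.countable
  (sigma_mk_injective (i := 0)).countable

section Realize

variable {L : Language} {M : Type*} (S : L.Structure M)

/-- `fiberX x ψ` is the 1-variable formula `ψ(x, y)`. -/
def fiberX (x : M) (ψ : Form2 L M) : Form1 L M :=
  ψ.subst (Sum.elim (fun m => Term.var (Sum.inl m)) ![Term.var (Sum.inl x), Term.var (Sum.inr 0)])

theorem realize_subst_params {α β : Type*} [L.Structure M] (φ : L.Formula (M ⊕ α))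
    (g : α → L.Term (M ⊕ β)) (v : β → M) :
    Formula.Realize (φ.subst (Sum.elim (fun m => Term.var (Sum.inl m)) g)) (Sum.elim id v) ↔
      φ.Realize (Sum.elim id fun i => (g i).realize (Sum.elim id v)) := by
  unfold Formula.Realize
  rw [BoundedFormula.realize_subst]
  apply iff_of_eq
  congr 1
  funext z
  rcases z with m | i <;> rfl

theorem realize1_not (χ : Form1 L M) (a : M) : Realize1 S χ.not a ↔ ¬Realize1 S χ a :=
  let _ := S; Formula.realize_not

theorem realize2_not (ψ : Form2 L M) (x y : M) : Realize2 S ψ.not x y ↔ ¬Realize2 S ψ x y :=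
  let _ := S; Formula.realize_not

theorem realize1_equal_param (c a : M) :
    Realize1 S ((Term.var (Sum.inr 0)).equal (Term.var (Sum.inl c))) a ↔ a = c :=
  let _ := S; Formula.realize_equal

theorem realize1_fiberX (x : M) (ψ : Form2 L M) (y : M) :
    Realize1 S (fiberX x ψ) y ↔ Realize2 S ψ x y := by
  let _ := S
  refine (realize_subst_params ψ _ _).trans ?_
  unfold Realize2
  apply iff_of_eq
  congr 1
  funext z
  rcases z with m | i
  · rfl
  · fin_cases i <;> rfl

theorem realize2_substX (c : M) (ψ : Form2 L M) (x y : M) :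
    Realize2 S (substX c ψ) x y ↔ Realize2 S ψ c y := by
  let _ := S
  refine (realize_subst_params ψ _ _).trans ?_
  unfold Realize2
  apply iff_of_eq
  congr 1
  funext z
  rcases z with m | i
  · rfl
  · fin_cases i <;> rfl

theorem realize2_toX (χ : Form1 L M) (x y : M) : Realize2 S (toX χ) x y ↔ Realize1 S χ x :=
  let _ := S; realize_subst_params χ _ _

theorem realize2_toY (χ : Form1 L M) (x y : M) : Realize2 S (toY χ) x y ↔ Realize1 S χ y :=
  let _ := S; realize_subst_params χ _ _

theorem realize2_toXY [Semigroup M] (f : L.Functions 2)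
    (hf : ∀ x y : M, S.funMap f ![x, y] = x * y) (χ : Form1 L M) (x y : M) :
    Realize2 S (toXY f χ) x y ↔ Realize1 S χ (x * y) := by
  let _ := S
  refine (realize_subst_params χ _ _).trans ?_
  unfold Realize1
  apply iff_of_eq
  congr 1
  funext z
  rcases z with m | i
  · rfl
  · rw [← hf]
    show Structure.funMap f _ = _
    congr
    ext j
    fin_cases j <;> rfl

end Realize

section Types

variable {L : Language} {M : Type*} (S : L.Structure M) {ι : Type*}

def filterType (F : Filter M) : Set (Form1 L M) :=
  {χ | {a | Realize1 S χ a} ∈ F}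

/-- The type of `(x, y)` where `x` is the `𝒰`-limit of `a` and `y` realizes `F` over `x`: the
formulas `ψ` such that `ψ(a i, y)` is in `filterType S F` for `𝒰`-almost all `i`. -/
def limitPairType (F : Filter M) (𝒰 : Filter ι) (a : ι → M) : Set (Form2 L M) :=
  {ψ | ∀ᶠ i in 𝒰, {b | Realize2 S ψ (a i) b} ∈ F}

def IsUltraOnDefinable (F : Filter M) : Prop :=
  ∀ χ : Form1 L M, {a | Realize1 S χ a} ∈ F ∨ {a | Realize1 S χ a}ᶜ ∈ F

variable {S} {F : Filter M}

theorem setOf_realize1_not (χ : Form1 L M) :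
    {a | Realize1 S χ.not a} = {a | Realize1 S χ a}ᶜ :=
  Set.ext fun a => realize1_not S χ a

theorem setOf_realize2_not (ψ : Form2 L M) (x : M) :
    {b | Realize2 S ψ.not x b} = {b | Realize2 S ψ x b}ᶜ :=
  Set.ext fun b => realize2_not S ψ x b

theorem IsUltraOnDefinable.compl_mem_iff [F.NeBot] (hF : IsUltraOnDefinable S F)
    (χ : Form1 L M) :
    {a | Realize1 S χ a}ᶜ ∈ F ↔ {a | Realize1 S χ a} ∉ F :=
  ⟨fun h hχ => compl_notMem hχ h, (hF χ).resolve_left⟩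

theorem IsUltraOnDefinable.compl_mem_iff₂ [F.NeBot] (hF : IsUltraOnDefinable S F)
    (ψ : Form2 L M) (x : M) :
    {b | Realize2 S ψ x b}ᶜ ∈ F ↔ {b | Realize2 S ψ x b} ∉ F := by
  simpa only [realize1_fiberX] using hF.compl_mem_iff (fiberX x ψ)

theorem isCompleteType1_filterType [F.NeBot] (hF : IsUltraOnDefinable S F) :
    IsCompleteType1 S (filterType S F) := by
  refine ⟨fun χ => ?_, fun s hs => ?_⟩
  · simp only [filterType, Set.mem_ofPred_eq, setOf_realize1_not, hF.compl_mem_iff, not_not]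
  · obtain ⟨a, ha⟩ := Filter.nonempty_of_mem ((biInter_finset_mem s).2 hs)
    exact ⟨a, fun χ hχ => Set.mem_iInter₂.1 ha χ hχ⟩

theorem isCompleteType2_limitPairType [F.NeBot] (hF : IsUltraOnDefinable S F)
    (𝒰 : Ultrafilter ι) (a : ι → M) : IsCompleteType2 S (limitPairType S F 𝒰 a) := by
  refine ⟨fun ψ => ?_, fun s hs => ?_⟩
  · simp only [limitPairType, Set.mem_ofPred_eq, setOf_realize2_not, hF.compl_mem_iff₂,
      Ultrafilter.eventually_not, not_not]
  · obtain ⟨i, hi⟩ := ((eventually_all_finset s).2 hs).exists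
    obtain ⟨b, hb⟩ := Filter.nonempty_of_mem ((biInter_finset_mem s).2 hi)
    exact ⟨a i, b, fun ψ hψ => Set.mem_iInter₂.1 hb ψ hψ⟩

theorem isIndependent_limitPairType (𝒰 : Filter ι) [𝒰.NeBot] (a : ι → M) :
    IsIndependent (limitPairType S F 𝒰 a) := by
  intro ψ hψ
  obtain ⟨i, hi⟩ := hψ.exists
  refine ⟨a i, .of_forall fun j => ?_⟩
  simpa only [realize2_substX] using hi

theorem toX_mem_limitPairType {𝒰 : Filter ι} {a : ι → M} {χ : Form1 L M}
    (h : ∀ᶠ i in 𝒰, Realize1 S χ (a i)) : toX χ ∈ limitPairType S F 𝒰 a :=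
  h.mono fun i hi => by simp only [realize2_toX, hi, Set.ofPred_true, univ_mem]

theorem toY_mem_limitPairType {𝒰 : Filter ι} {a : ι → M} {χ : Form1 L M}
    (h : χ ∈ filterType S F) : toY χ ∈ limitPairType S F 𝒰 a :=
  .of_forall fun i => by simp only [realize2_toY]; exact h

theorem toXY_mem_limitPairType [Semigroup M] {f : L.Functions 2}
    (hf : ∀ x y : M, S.funMap f ![x, y] = x * y) {𝒰 : Filter ι} {a : ι → M} {χ : Form1 L M}
    (h : ∀ᶠ i in 𝒰, (a i * ·) ⁻¹' {b | Realize1 S χ b} ∈ F) :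
    toXY f χ ∈ limitPairType S F 𝒰 a :=
  h.mono fun i hi => by simp only [realize2_toXY S f hf]; exact hi

theorem isIdempotentType_filterType [Semigroup M] {f : L.Functions 2}
    (hf : ∀ x y : M, S.funMap f ![x, y] = x * y) [F.NeBot] (hF : IsUltraOnDefinable S F)
    (𝒰 : Ultrafilter ι) (a : ι → M) (ha : Tendsto a 𝒰 F)
    (hmul : ∀ A ∈ F, ∀ᶠ i in 𝒰, (a i * ·) ⁻¹' A ∈ F) :
    IsIdempotentType S f (filterType S F) :=
  ⟨isCompleteType1_filterType hF, limitPairType S F 𝒰 a, isCompleteType2_limitPairType hF 𝒰 a,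
    isIndependent_limitPairType _ a, fun _ hχ => toX_mem_limitPairType (ha.eventually hχ),
    fun _ hχ => toY_mem_limitPairType hχ, fun _ hχ => toXY_mem_limitPairType hf (hmul _ hχ)⟩

theorem not_isPrincipalType_filterType (hF : IsUltraOnDefinable S F) (h : ∀ c : M, {c} ∉ F) :
    ¬IsPrincipalType S (filterType S F) := by
  rintro ⟨c, hc⟩
  have hset : {a | Realize1 S ((Term.var (Sum.inr 0)).equal (Term.var (Sum.inl c))) a} = {c} :=
    Set.ext fun a => realize1_equal_param S c a
  rcases hF ((Term.var (Sum.inr 0)).equal (Term.var (Sum.inl c))) with hmem | hmem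
  · exact h c (hset ▸ hmem)
  · have := hc _ (show _ ∈ filterType S F from (setOf_realize1_not _).symm ▸ hmem)
    exact (realize1_not S _ c).1 this ((realize1_equal_param S c c).2 rfl)

end Types

def IsHindman (M : Type*) [Semigroup M] : Prop :=
  ∀ A : Set M, IsIIP A → ∀ Y Z : Set M, A = Y ∪ Z → IsIIP Y ∨ IsIIP Z

section FPChain

variable {M : Type*} [Semigroup M]

theorem infinite_FP_tail {u : Stream' M} (h : (Hindman.FP u).Infinite) :
    (Hindman.FP u.tail).Infinite := by
  have hsub : Hindman.FP u ⊆
      insert u.head (Hindman.FP u.tail ∪ (u.head * ·) '' Hindman.FP u.tail) := by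
    rintro _ (_ | ⟨_, m, hm⟩ | ⟨_, m, hm⟩)
    exacts [Set.mem_insert _ _, Or.inr (Or.inl hm), Or.inr (Or.inr ⟨m, hm, rfl⟩)]
  exact fun hfin => h (((hfin.union (hfin.image _)).insert _).subset hsub)

theorem exists_FP_subset_tail_decide (hH : IsHindman M) {w : Stream' M}
    (hw : (Hindman.FP w).Infinite) (T : Set M) : ∃ v : Stream' M, (Hindman.FP v).Infinite ∧
      Hindman.FP v ⊆ Hindman.FP w.tail ∧ (Hindman.FP v ⊆ T ∨ Hindman.FP v ⊆ Tᶜ) := by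
  rcases hH _ ⟨w.tail, subset_rfl, infinite_FP_tail hw⟩ _ _ (Set.inter_union_compl _ T).symm
    with ⟨v, hv, hvinf⟩ | ⟨v, hv, hvinf⟩
  · exact ⟨v, hvinf, fun _ hx => (hv hx).1, .inl fun _ hx => (hv hx).2⟩
  · exact ⟨v, hvinf, fun _ hx => (hv hx).1, .inr fun _ hx => (hv hx).2⟩

theorem exists_FP_chain (hH : IsHindman M) {X : Set M} (hX : IsIIP X) (T : ℕ → Set M) :
    ∃ u : ℕ → Stream' M, Hindman.FP (u 0) ⊆ X ∧ (∀ k, (Hindman.FP (u k)).Infinite) ∧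
      (∀ k, Hindman.FP (u (k + 1)) ⊆ Hindman.FP (u k).tail) ∧
      ∀ k, Hindman.FP (u (k + 1)) ⊆ T k ∨ Hindman.FP (u (k + 1)) ⊆ (T k)ᶜ := by
  obtain ⟨u₀, hu₀X, hu₀⟩ := hX
  choose next hnext using fun (w : {w : Stream' M // (Hindman.FP w).Infinite}) k =>
    exists_FP_subset_tail_decide hH w.2 (T k)
  let u : ℕ → {w : Stream' M // (Hindman.FP w).Infinite} :=
    fun n => Nat.rec ⟨u₀, hu₀⟩ (fun k w => ⟨next w k, (hnext w k).1⟩) n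
  exact ⟨fun k => (u k).1, hu₀X, fun k => (u k).2, fun k => (hnext _ k).2.1,
    fun k => (hnext _ k).2.2⟩

theorem exists_filter_decide_tendsto_mul (hH : IsHindman M) {X : Set M} (hX : IsIIP X)
    (T : ℕ → Set M) :
    ∃ (F : Filter M) (a : ℕ → M), F.NeBot ∧ X ∈ F ∧ (∀ k, T k ∈ F ∨ (T k)ᶜ ∈ F) ∧
      (∀ c, {c} ∉ F) ∧ Tendsto a atTop F ∧ ∀ A ∈ F, ∀ᶠ i in atTop, (a i * ·) ⁻¹' A ∈ F := by
  obtain ⟨u, hX, hinf, hchain, hdec⟩ := exists_FP_chain hH hX T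
  have hanti : Antitone fun k => Hindman.FP (u k) :=
    antitone_nat_of_succ_le fun k => (hchain k).trans fun _ => Hindman.FP.tail _ _
  have hF := HasAntitoneBasis.iInf_principal hanti
  refine ⟨_, fun k => (u k).head, hF.toHasBasis.neBot_iff.2 fun _ => (hinf _).nonempty,
    mem_of_superset (hF.mem 0) hX,
    fun k => (hdec k).imp (mem_of_superset (hF.mem _)) (mem_of_superset (hF.mem _)),
    fun c hc => ?_, hF.tendsto fun k => Hindman.FP.head _, fun A hA => ?_⟩
  · obtain ⟨k, hk⟩ := hF.mem_iff.1 hc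
    exact hinf k ((Set.finite_singleton c).subset hk)
  · obtain ⟨k, hk⟩ := hF.mem_iff.1 hA
    filter_upwards [eventually_ge_atTop k] with i hi
    exact mem_of_superset (hF.mem (i + 1))
      fun b hb => hk (hanti hi (Hindman.FP.cons _ _ (hchain i hb)))

end FPChain

/-- in a countable Hindman semigroup (IIP sets are partition regular), for
every semigroup structure in a countable language based on it and every definable IIP set there
is a nonprincipal idempotent complete 1-type containing the formula defining it. -/
theorem exists_nonprincipal_idempotent_type_of_hindman {M : Type*} [Semigroup M] [Countable M]
    (hH : ∀ A : Set M, IsIIP A → ∀ Y Z : Set M, A = Y ∪ Z → IsIIP Y ∨ IsIIP Z)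
    (L : Language) (hL : Countable L.Symbols) (f : L.Functions 2) (S : L.Structure M)
    (hf : ∀ x y : M, S.funMap f ![x, y] = x * y)
    (φ : Form1 L M) (hφ : IsIIP {a : M | Realize1 S φ a}) :
    ∃ p : Set (Form1 L M), φ ∈ p ∧ IsIdempotentType S f p ∧ ¬IsPrincipalType S p := by
  have : Countable (Form1 L M) := countable_formula _
  obtain ⟨τ, hτ⟩ := exists_surjective_nat (Form1 L M)
  obtain ⟨F, a, hF, hφF, hdec, hsingleton, ha, hmul⟩ :=
    exists_filter_decide_tendsto_mul hH hφ fun k => {x | Realize1 S (τ k) x}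
  have hFdef : IsUltraOnDefinable S F := fun χ => by
    obtain ⟨k, rfl⟩ := hτ χ
    exact hdec k
  have hle : (hyperfilter ℕ : Filter ℕ) ≤ atTop := Nat.cofinite_eq_atTop ▸ hyperfilter_le_cofinite
  exact ⟨filterType S F, hφF,
    isIdempotentType_filterType hf hFdef (hyperfilter ℕ) a (ha.mono_left hle)
      fun A hA => (hmul A hA).filter_mono hle,
    not_isPrincipalType_filterType hFdef hsingleton⟩
end
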